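/- In the boundary Becker–Döring system with conservation law Σ_{ℓ≥2} ℓ c_ℓ(t) = 1, the function g(t) = Σ_{ℓ≥2} c_ℓ(t) is strictly decreasing (unless c₂ ≡ 0) and converges to 0 as t → ∞. -/

import Mathlib

noncomputable def bdA (a1 : ℝ) (ℓ : ℕ) : ℝ := a1 * (ℓ:ℝ) ^ ((1:ℝ)/3)

noncomputable def bdB (a1 zs q : ℝ) (ℓ : ℕ) : ℝ :=
  bdA a1 ℓ * (zs + q / (ℓ:ℝ) ^ ((1:ℝ)/3))

noncomputable def bdJ (a1 zs q : ℝ) (c1 : ℝ → ℝ) (c : ℕ → ℝ → ℝ) (ℓ : ℕ) (t : ℝ) : ℝ :=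
  bdA a1 ℓ * c1 t * c ℓ t - bdB a1 zs q (ℓ+1) * c (ℓ+1) t

private lemma cube_le' {x : ℝ} (hx : 1 ≤ x) : x ^ ((1:ℝ)/3) ≤ x := by
  nth_rewrite 2 [← Real.rpow_one x]
  exact Real.rpow_le_rpow_of_exponent_le hx (by norm_num)

private lemma tele' (w : ℕ → ℝ) : ∀ n, 2 ≤ n →
    (∑ k ∈ Finset.range (n+1), if 2 ≤ k then w (k-1) - w k else 0) = w 1 - w n := by
  intro n hn
  induction n, hn using Nat.le_induction with
  | base => simp [Finset.sum_range_succ]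
  | succ n hn ih =>
      rw [Finset.sum_range_succ, ih]
      have h2 : 2 ≤ n + 1 := by omega
      simp only [if_pos h2, Nat.add_sub_cancel]
      ring

private lemma abel4' (w : ℕ → ℝ) : ∀ n, 2 ≤ n →
    (∑ k ∈ Finset.range (n+1), if 2 ≤ k then (k:ℝ) * (w (k-1) - w k) else 0)
      = 2 * w 1 + (∑ k ∈ Finset.range n, if 2 ≤ k then w k else 0) - n * w n := by
  intro n hn
  induction n, hn using Nat.le_induction with
  | base => norm_num [Finset.sum_range_succ]; ring
  | succ n hn ih =>
      rw [Finset.sum_range_succ, ih, Finset.sum_range_succ]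
      have h2 : 2 ≤ n + 1 := by omega
      have h2' : 2 ≤ n := hn
      simp only [if_pos h2, if_pos h2', Nat.add_sub_cancel]
      push_cast
      ring

private lemma rpow_third_le' {N m : ℕ} (hN : 1 ≤ N) (h : N ≤ m) :
    ((m:ℝ)) ^ ((1:ℝ)/3) ≤ (m:ℝ) / ((N:ℝ)) ^ ((2:ℝ)/3) := by
  have hNpos : (0:ℝ) < (N:ℝ) := by exact_mod_cast hN
  have hmpos : (0:ℝ) < (m:ℝ) := lt_of_lt_of_le hNpos (by exact_mod_cast h)
  rw [le_div_iff₀ (Real.rpow_pos_of_pos hNpos _)]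
  have h1 : ((N:ℝ)) ^ ((2:ℝ)/3) ≤ ((m:ℝ)) ^ ((2:ℝ)/3) :=
    Real.rpow_le_rpow hNpos.le (by exact_mod_cast h) (by norm_num)
  calc (m:ℝ) ^ ((1:ℝ)/3) * (N:ℝ) ^ ((2:ℝ)/3)
      ≤ (m:ℝ) ^ ((1:ℝ)/3) * (m:ℝ) ^ ((2:ℝ)/3) := by
        exact mul_le_mul_of_nonneg_left h1 (Real.rpow_nonneg hmpos.le _)
    _ = (m:ℝ) ^ ((1:ℝ)/3 + (2:ℝ)/3) := (Real.rpow_add hmpos _ _).symm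
    _ = (m:ℝ) := by norm_num

set_option maxHeartbeats 1000000 in
theorem stmt_16 (a1 zs q : ℝ) (ha1 : 0 < a1) (hzs : 0 < zs) (hq : 0 < q)
    (c1 : ℝ → ℝ) (c : ℕ → ℝ → ℝ)
    (hc0 : ∀ t, c 0 t = 0) (hc1 : ∀ t, c 1 t = 0)
    (hnn : ∀ (ℓ : ℕ) (t : ℝ), 0 ≤ t → 0 ≤ c ℓ t)
    (hODE : ∀ ℓ : ℕ, 2 ≤ ℓ → ∀ t, 0 ≤ t →
      HasDerivAt (c ℓ) (bdJ a1 zs q c1 c (ℓ-1) t - bdJ a1 zs q c1 c ℓ t) t)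
    (hsum : ∀ t, 0 ≤ t → Summable (fun ℓ : ℕ => (ℓ:ℝ) * c ℓ t))
    (hsumA : ∀ t, 0 ≤ t → Summable (fun ℓ : ℕ => bdA a1 ℓ * c ℓ t))
    (hsumB : ∀ t, 0 ≤ t → Summable (fun ℓ : ℕ => bdB a1 zs q ℓ * c ℓ t))
    (hcons : ∀ t, 0 ≤ t → ∑' ℓ : ℕ, (ℓ:ℝ) * c ℓ t = 1)
    (hterm : ∀ t, 0 ≤ t →
      HasDerivAt (fun s => ∑' ℓ : ℕ, (ℓ:ℝ) * c ℓ s)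
        (∑' ℓ : ℕ, if 2 ≤ ℓ then
          (ℓ:ℝ) * (bdJ a1 zs q c1 c (ℓ-1) t - bdJ a1 zs q c1 c ℓ t) else 0) t)
    (hsum0 : ∀ t, 0 ≤ t → Summable (fun ℓ : ℕ => c ℓ t))
    (hterm2 : ∀ t, 0 ≤ t →
      HasDerivAt (fun s => ∑' ℓ : ℕ, c ℓ s)
        (∑' ℓ : ℕ, if 2 ≤ ℓ then
          bdJ a1 zs q c1 c (ℓ-1) t - bdJ a1 zs q c1 c ℓ t else 0) t)
    (hc1cont : ContinuousOn c1 (Set.Ici 0)) :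
    ((∃ t, 0 ≤ t ∧ c 2 t ≠ 0) →
      StrictAntiOn (fun t => ∑' ℓ : ℕ, c ℓ t) (Set.Ici 0)) ∧
    Filter.Tendsto (fun t => ∑' ℓ : ℕ, c ℓ t) Filter.atTop (nhds 0) := by
  classical
  have hA0 : bdA a1 0 = 0 := by
    simp [bdA, Real.zero_rpow (by norm_num : (1:ℝ)/3 ≠ 0)]
  have hApos : ∀ ℓ : ℕ, 1 ≤ ℓ → 0 < bdA a1 ℓ := by
    intro ℓ hℓ
    have : (0:ℝ) < (ℓ:ℝ) := by exact_mod_cast hℓ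
    exact mul_pos ha1 (Real.rpow_pos_of_pos this _)
  have hAnn : ∀ ℓ : ℕ, 0 ≤ bdA a1 ℓ := by
    intro ℓ
    cases Nat.eq_zero_or_pos ℓ with
    | inl h => simp [h, hA0]
    | inr h => exact (hApos ℓ h).le
  have hB0 : bdB a1 zs q 0 = 0 := by simp [bdB, hA0]
  have hBpos : ∀ ℓ : ℕ, 1 ≤ ℓ → 0 < bdB a1 zs q ℓ := by
    intro ℓ hℓ
    have hc : (0:ℝ) < (ℓ:ℝ) := by exact_mod_cast hℓ
    have : 0 < zs + q / (ℓ:ℝ) ^ ((1:ℝ)/3) :=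
      add_pos hzs (div_pos hq (Real.rpow_pos_of_pos hc _))
    exact mul_pos (hApos ℓ hℓ) this
  have hBnn : ∀ ℓ : ℕ, 0 ≤ bdB a1 zs q ℓ := by
    intro ℓ
    cases Nat.eq_zero_or_pos ℓ with
    | inl h => simp [h, hB0]
    | inr h => exact (hBpos ℓ h).le
  have hBeq : ∀ ℓ : ℕ, 1 ≤ ℓ → bdB a1 zs q ℓ = a1 * (zs * (ℓ:ℝ) ^ ((1:ℝ)/3) + q) := by
    intro ℓ hℓ
    have hc : (0:ℝ) < (ℓ:ℝ) := by exact_mod_cast hℓ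
    have hne : ((ℓ:ℝ)) ^ ((1:ℝ)/3) ≠ 0 := (Real.rpow_pos_of_pos hc _).ne'
    simp only [bdB, bdA]
    field_simp
  have hAle : ∀ ℓ : ℕ, bdA a1 ℓ ≤ a1 * ℓ := by
    intro ℓ
    cases Nat.eq_zero_or_pos ℓ with
    | inl h => simp [h, hA0]
    | inr h =>
      have h1 : (1:ℝ) ≤ (ℓ:ℝ) := by exact_mod_cast h
      exact mul_le_mul_of_nonneg_left (cube_le' h1) ha1.le
  have hBle : ∀ ℓ : ℕ, bdB a1 zs q ℓ ≤ a1 * (zs + q) * ℓ := by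
    intro ℓ
    cases Nat.eq_zero_or_pos ℓ with
    | inl h => simp [h, hB0]
    | inr h =>
      have h1 : (1:ℝ) ≤ (ℓ:ℝ) := by exact_mod_cast h
      rw [hBeq ℓ h]
      have : zs * (ℓ:ℝ) ^ ((1:ℝ)/3) + q ≤ (zs + q) * ℓ := by
        have := cube_le' h1
        nlinarith [hzs.le, hq.le]
      nlinarith
  have hck_deriv : ∀ k : ℕ, ∀ t : ℝ, 0 ≤ t → HasDerivAt (c k)
      (if 2 ≤ k then bdJ a1 zs q c1 c (k-1) t - bdJ a1 zs q c1 c k t else 0) t := by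
    intro k t ht
    match k with
    | 0 =>
      rw [show c 0 = (fun _ : ℝ => (0:ℝ)) from funext hc0]
      simpa using hasDerivAt_const t (0:ℝ)
    | 1 =>
      rw [show c 1 = (fun _ : ℝ => (0:ℝ)) from funext hc1]
      simpa using hasDerivAt_const t (0:ℝ)
    | (n+2) =>
      have h2 : 2 ≤ n + 2 := by omega
      simpa [if_pos h2] using hODE (n+2) h2 t ht
  have hccont : ∀ k : ℕ, ∀ t : ℝ, 0 ≤ t → ContinuousAt (c k) t :=
    fun k t ht => (hck_deriv k t ht).continuousAt
  have hcount_deriv : ∀ L : ℕ, 2 ≤ L → ∀ t : ℝ, 0 ≤ t →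
      HasDerivAt (fun s => ∑ k ∈ Finset.range (L+1), c k s)
        (bdJ a1 zs q c1 c 1 t - bdJ a1 zs q c1 c L t) t := by
    intro L hL t ht
    have := HasDerivAt.fun_sum (fun k _ => hck_deriv k t ht)
      (u := Finset.range (L+1))
    rwa [tele' (fun k => bdJ a1 zs q c1 c k t) L hL] at this
  have hmass_deriv : ∀ L : ℕ, 2 ≤ L → ∀ t : ℝ, 0 ≤ t →
      HasDerivAt (fun s => ∑ k ∈ Finset.range (L+1), (k:ℝ) * c k s)
        (2 * bdJ a1 zs q c1 c 1 t
          + (∑ k ∈ Finset.range L, if 2 ≤ k then bdJ a1 zs q c1 c k t else 0)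
          - L * bdJ a1 zs q c1 c L t) t := by
    intro L hL t ht
    have hterm' : ∀ k : ℕ, k ∈ Finset.range (L+1) → HasDerivAt (fun s => (k:ℝ) * c k s)
        (if 2 ≤ k then (k:ℝ) * (bdJ a1 zs q c1 c (k-1) t - bdJ a1 zs q c1 c k t) else 0) t := by
      intro k _
      have := (hck_deriv k t ht).const_mul (k:ℝ)
      by_cases h : 2 ≤ k <;> simp [h] at this ⊢ <;> exact this
    have := HasDerivAt.fun_sum hterm'
    rwa [abel4' (fun k => bdJ a1 zs q c1 c k t) L hL] at this
  have hwsum : ∀ t, 0 ≤ t → Summable (fun ℓ : ℕ => bdJ a1 zs q c1 c ℓ t) := by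
    intro t ht
    have h1 : Summable (fun ℓ : ℕ => bdA a1 ℓ * c1 t * c ℓ t) := by
      have := (hsumA t ht).mul_left (c1 t)
      exact this.congr (fun ℓ => by ring)
    have h2 : Summable (fun ℓ : ℕ => bdB a1 zs q (ℓ+1) * c (ℓ+1) t) :=
      (summable_nat_add_iff (f := fun ℓ : ℕ => bdB a1 zs q ℓ * c ℓ t) 1).mpr (hsumB t ht)
    exact (h1.sub h2).congr (fun ℓ => rfl)
  have hFsum : ∀ t, 0 ≤ t → Summable (fun ℓ : ℕ =>
      if 2 ≤ ℓ then bdJ a1 zs q c1 c (ℓ-1) t - bdJ a1 zs q c1 c ℓ t else 0) := by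
    intro t ht
    have hw := hwsum t ht
    have h1 : Summable (fun ℓ : ℕ => if 2 ≤ ℓ then bdJ a1 zs q c1 c (ℓ-1) t else 0) := by
      apply (summable_nat_add_iff 2).mp
      apply ((summable_nat_add_iff (f := fun ℓ : ℕ => bdJ a1 zs q c1 c ℓ t) 1).mpr hw).congr
      intro n
      simp [Nat.add_sub_cancel]
    have h2 : Summable (fun ℓ : ℕ => if 2 ≤ ℓ then bdJ a1 zs q c1 c ℓ t else 0) := by
      apply (summable_nat_add_iff 2).mp
      apply ((summable_nat_add_iff (f := fun ℓ : ℕ => bdJ a1 zs q c1 c ℓ t) 2).mpr hw).congr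
      intro n
      simp
    exact (h1.sub h2).congr (fun ℓ => by by_cases h : 2 ≤ ℓ <;> simp [h])
  have hDval : ∀ t, 0 ≤ t →
      (∑' ℓ : ℕ, if 2 ≤ ℓ then bdJ a1 zs q c1 c (ℓ-1) t - bdJ a1 zs q c1 c ℓ t else 0)
        = -(bdB a1 zs q 2 * c 2 t) := by
    intro t ht
    set w := fun ℓ : ℕ => bdJ a1 zs q c1 c ℓ t with hw_def
    have hF := hFsum t ht
    have hw := hwsum t ht
    have t1 : Filter.Tendsto (fun n : ℕ => ∑ k ∈ Finset.range (n+1),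
        if 2 ≤ k then w (k-1) - w k else 0) Filter.atTop
        (nhds (∑' ℓ : ℕ, if 2 ≤ ℓ then w (ℓ-1) - w ℓ else 0)) :=
      hF.hasSum.tendsto_sum_nat.comp (Filter.tendsto_add_atTop_nat 1)
    have t2 : Filter.Tendsto (fun n : ℕ => w 1 - w n) Filter.atTop (nhds (w 1 - 0)) :=
      tendsto_const_nhds.sub hw.tendsto_atTop_zero
    have heq : (fun n : ℕ => ∑ k ∈ Finset.range (n+1),
        if 2 ≤ k then w (k-1) - w k else 0) =ᶠ[Filter.atTop] (fun n => w 1 - w n) := by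
      filter_upwards [Filter.eventually_ge_atTop 2] with n hn
      exact tele' w n hn
    have := tendsto_nhds_unique (t1.congr' heq) t2
    rw [this]
    have : w 1 = -(bdB a1 zs q 2 * c 2 t) := by
      simp [hw_def, bdJ, hc1 t]
    rw [this]; ring
  have hg' : ∀ t, 0 ≤ t → HasDerivAt (fun s => ∑' ℓ : ℕ, c ℓ s)
      (-(bdB a1 zs q 2 * c 2 t)) t := by
    intro t ht
    have := hterm2 t ht
    rwa [hDval t ht] at this
  have htailmass : ∀ (N : ℕ) (t : ℝ), 0 ≤ t →
      (∑' i : ℕ, ((i+N:ℕ):ℝ) * c (i+N) t) ≤ 1 := by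
    intro N t ht
    have h := Summable.sum_add_tsum_nat_add (f := fun ℓ : ℕ => (ℓ:ℝ) * c ℓ t) N (hsum t ht)
    rw [hcons t ht] at h
    have hpart : 0 ≤ ∑ i ∈ Finset.range N, (i:ℝ) * c i t :=
      Finset.sum_nonneg (fun i _ => mul_nonneg (by positivity) (hnn i t ht))
    linarith
  have htail_count : ∀ (N : ℕ) (t : ℝ), 0 ≤ t →
      (∑' ℓ : ℕ, c ℓ t) - (∑ k ∈ Finset.range N, c k t) = ∑' i : ℕ, c (i+N) t := by
    intro N t ht
    have h := Summable.sum_add_tsum_nat_add (f := fun ℓ : ℕ => c ℓ t) N (hsum0 t ht)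
    linarith
  have htail_count_le : ∀ (N : ℕ) (t : ℝ), 0 ≤ t →
      (N:ℝ) * (∑' i : ℕ, c (i+N) t) ≤ ∑' i : ℕ, ((i+N:ℕ):ℝ) * c (i+N) t := by
    intro N t ht
    rw [← tsum_mul_left]
    apply Summable.tsum_le_tsum
    · intro i
      have : (N:ℝ) ≤ ((i+N:ℕ):ℝ) := by exact_mod_cast Nat.le_add_left N i
      exact mul_le_mul_of_nonneg_right this (hnn _ t ht)
    · exact ((summable_nat_add_iff N).mpr (hsum0 t ht)).mul_left _
    · exact (summable_nat_add_iff N).mpr (hsum t ht)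
  have hg_le_one : ∀ (t : ℝ), 0 ≤ t → (∑' ℓ : ℕ, c ℓ t) ≤ 1 := by
    intro t ht
    rw [← hcons t ht]
    apply Summable.tsum_le_tsum _ (hsum0 t ht) (hsum t ht)
    intro k
    match k with
    | 0 => simp [hc0 t]
    | (n+1) =>
      have h1 : (1:ℝ) ≤ ((n+1:ℕ):ℝ) := by exact_mod_cast Nat.succ_le_succ (Nat.zero_le n)
      nlinarith [hnn (n+1) t ht]
  have hg_nonneg : ∀ (t : ℝ), 0 ≤ t → 0 ≤ ∑' ℓ : ℕ, c ℓ t :=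
    fun t ht => tsum_nonneg (fun ℓ => hnn ℓ t ht)
  have hc2_le : ∀ (t : ℝ), 0 ≤ t → 2 * c 2 t ≤ 1 := by
    intro t ht
    have := Summable.le_tsum (hsum t ht) 2
      (fun k _ => mul_nonneg (by positivity) (hnn k t ht))
    rw [hcons t ht] at this
    exact_mod_cast this
  have hSA_le : ∀ (t : ℝ), 0 ≤ t → (∑' ℓ : ℕ, bdA a1 ℓ * c ℓ t) ≤ a1 := by
    intro t ht
    have h1 : (∑' ℓ : ℕ, bdA a1 ℓ * c ℓ t) ≤ ∑' ℓ : ℕ, a1 * ((ℓ:ℝ) * c ℓ t) := by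
      apply Summable.tsum_le_tsum _ (hsumA t ht) ((hsum t ht).mul_left a1)
      intro ℓ
      have := mul_le_mul_of_nonneg_right (hAle ℓ) (hnn ℓ t ht)
      calc bdA a1 ℓ * c ℓ t ≤ a1 * (ℓ:ℝ) * c ℓ t := this
        _ = a1 * ((ℓ:ℝ) * c ℓ t) := by ring
    rw [tsum_mul_left, hcons t ht] at h1
    simpa using h1
  have htailA : ∀ (N : ℕ), 1 ≤ N → ∀ (t : ℝ), 0 ≤ t →
      (∑' i : ℕ, bdA a1 (i+N) * c (i+N) t) ≤ a1 / ((N:ℝ)) ^ ((2:ℝ)/3) := by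
    intro N hN t ht
    have hNpos : (0:ℝ) < ((N:ℝ)) ^ ((2:ℝ)/3) :=
      Real.rpow_pos_of_pos (by exact_mod_cast hN) _
    have hmaj : ∀ i : ℕ, bdA a1 (i+N) * c (i+N) t
        ≤ (a1 / ((N:ℝ)) ^ ((2:ℝ)/3)) * (((i+N:ℕ):ℝ) * c (i+N) t) := by
      intro i
      have h3 := rpow_third_le' hN (Nat.le_add_left N i)
      have hcn := hnn (i+N) t ht
      have : bdA a1 (i+N) ≤ a1 / ((N:ℝ)) ^ ((2:ℝ)/3) * ((i+N:ℕ):ℝ) := by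
        unfold bdA
        rw [div_mul_eq_mul_div, mul_div_assoc]
        exact mul_le_mul_of_nonneg_left h3 ha1.le
      calc bdA a1 (i+N) * c (i+N) t
          ≤ (a1 / ((N:ℝ)) ^ ((2:ℝ)/3) * ((i+N:ℕ):ℝ)) * c (i+N) t :=
            mul_le_mul_of_nonneg_right this hcn
        _ = (a1 / ((N:ℝ)) ^ ((2:ℝ)/3)) * (((i+N:ℕ):ℝ) * c (i+N) t) := by ring
    have hs1 : Summable (fun i : ℕ => bdA a1 (i+N) * c (i+N) t) :=
      (summable_nat_add_iff N).mpr (hsumA t ht)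
    have hs2 : Summable (fun i : ℕ => (((i+N:ℕ):ℝ) * c (i+N) t)) :=
      (summable_nat_add_iff N).mpr (hsum t ht)
    calc (∑' i : ℕ, bdA a1 (i+N) * c (i+N) t)
        ≤ ∑' i : ℕ, (a1 / ((N:ℝ)) ^ ((2:ℝ)/3)) * (((i+N:ℕ):ℝ) * c (i+N) t) :=
          Summable.tsum_le_tsum hmaj hs1 (hs2.mul_left _)
      _ = (a1 / ((N:ℝ)) ^ ((2:ℝ)/3)) * ∑' i : ℕ, (((i+N:ℕ):ℝ) * c (i+N) t) := tsum_mul_left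
      _ ≤ (a1 / ((N:ℝ)) ^ ((2:ℝ)/3)) * 1 := by
          exact mul_le_mul_of_nonneg_left (htailmass N t ht) (by positivity)
      _ = a1 / ((N:ℝ)) ^ ((2:ℝ)/3) := mul_one _
  have hSAcont : ContinuousOn (fun t => ∑' ℓ : ℕ, bdA a1 ℓ * c ℓ t) (Set.Ici 0) := by
    apply TendstoUniformlyOn.continuousOn
      (F := fun (N : ℕ) (t : ℝ) => ∑ k ∈ Finset.range N, bdA a1 k * c k t)
      (p := Filter.atTop)
    · rw [Metric.tendstoUniformlyOn_iff]
      intro ε hε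
      have hlim : Filter.Tendsto (fun N : ℕ => a1 / ((N:ℝ)) ^ ((2:ℝ)/3))
          Filter.atTop (nhds 0) :=
        Filter.Tendsto.div_atTop tendsto_const_nhds
          ((tendsto_rpow_atTop (by norm_num : (0:ℝ) < (2:ℝ)/3)).comp
            tendsto_natCast_atTop_atTop)
      filter_upwards [hlim.eventually (gt_mem_nhds hε), Filter.eventually_ge_atTop 1]
        with N hNε hN1 t ht
      have htail := Summable.sum_add_tsum_nat_add (f := fun ℓ : ℕ => bdA a1 ℓ * c ℓ t) N (hsumA t ht)
      have htnn : 0 ≤ ∑' i : ℕ, bdA a1 (i+N) * c (i+N) t :=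
        tsum_nonneg (fun i => mul_nonneg (hAnn _) (hnn _ t ht))
      rw [Real.dist_eq, abs_sub_comm]
      have : (∑ k ∈ Finset.range N, bdA a1 k * c k t) - (∑' ℓ : ℕ, bdA a1 ℓ * c ℓ t)
          = -(∑' i : ℕ, bdA a1 (i+N) * c (i+N) t) := by linarith
      rw [this, abs_neg, abs_of_nonneg htnn]
      exact lt_of_le_of_lt (htailA N hN1 t ht) hNε
    · apply Filter.Eventually.frequently
      filter_upwards with N
      apply continuousOn_finset_sum
      intro k _
      intro t ht
      exact (((continuous_const.mul continuous_id).continuousAt).comp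
        (hccont k t ht)).continuousWithinAt
  have htailQ : ∀ (N : ℕ), 1 ≤ N → ∀ (t : ℝ), 0 ≤ t →
      (∑' i : ℕ, bdB a1 zs q (i+N+1) * c (i+N+1) t)
        ≤ a1 * zs / ((N:ℝ)) ^ ((2:ℝ)/3) + a1 * q / N := by
    intro N hN t ht
    set D : ℝ := a1 * zs / ((N:ℝ)) ^ ((2:ℝ)/3) + a1 * q / N with hD
    have hNpos : (0:ℝ) < (N:ℝ) := by exact_mod_cast hN
    have hN23 : (0:ℝ) < ((N:ℝ)) ^ ((2:ℝ)/3) := Real.rpow_pos_of_pos hNpos _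
    have hmaj : ∀ i : ℕ, bdB a1 zs q (i+N+1) * c (i+N+1) t
        ≤ D * (((i+N+1:ℕ):ℝ) * c (i+N+1) t) := by
      intro i
      have hm1 : (1:ℕ) ≤ i+N+1 := by omega
      have hmN : N ≤ i+N+1 := by omega
      have h3 := rpow_third_le' hN hmN
      have hcn := hnn (i+N+1) t ht
      have hmpos : (0:ℝ) < ((i+N+1:ℕ):ℝ) := by exact_mod_cast hm1
      have hkey : bdB a1 zs q (i+N+1) ≤ D * ((i+N+1:ℕ):ℝ) := by
        rw [hBeq _ hm1, hD]
        have e1 : zs * ((i+N+1:ℕ):ℝ) ^ ((1:ℝ)/3) ≤ zs * (((i+N+1:ℕ):ℝ) / ((N:ℝ)) ^ ((2:ℝ)/3)) :=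
          mul_le_mul_of_nonneg_left h3 hzs.le
        have e2 : q ≤ q * (((i+N+1:ℕ):ℝ) / (N:ℝ)) := by
          have : (1:ℝ) ≤ ((i+N+1:ℕ):ℝ) / (N:ℝ) := by
            rw [le_div_iff₀ hNpos]
            have : (N:ℝ) ≤ ((i+N+1:ℕ):ℝ) := by exact_mod_cast hmN
            linarith
          nlinarith
        have := add_le_add e1 e2
        calc a1 * (zs * ((i+N+1:ℕ):ℝ) ^ ((1:ℝ)/3) + q)
            ≤ a1 * (zs * (((i+N+1:ℕ):ℝ) / ((N:ℝ)) ^ ((2:ℝ)/3)) + q * (((i+N+1:ℕ):ℝ) / (N:ℝ))) :=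
              mul_le_mul_of_nonneg_left this ha1.le
          _ = (a1 * zs / ((N:ℝ)) ^ ((2:ℝ)/3) + a1 * q / N) * ((i+N+1:ℕ):ℝ) := by
              field_simp
      have : bdB a1 zs q (i+N+1) * c (i+N+1) t ≤ (D * ((i+N+1:ℕ):ℝ)) * c (i+N+1) t :=
        mul_le_mul_of_nonneg_right hkey hcn
      calc bdB a1 zs q (i+N+1) * c (i+N+1) t
          ≤ (D * ((i+N+1:ℕ):ℝ)) * c (i+N+1) t := this
        _ = D * (((i+N+1:ℕ):ℝ) * c (i+N+1) t) := by ring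
    have hs1 : Summable (fun i : ℕ => bdB a1 zs q (i+N+1) * c (i+N+1) t) :=
      (summable_nat_add_iff
        (f := fun k : ℕ => bdB a1 zs q (k+1) * c (k+1) t) N).mpr
        ((summable_nat_add_iff (f := fun ℓ : ℕ => bdB a1 zs q ℓ * c ℓ t) 1).mpr (hsumB t ht))
    have hs2 : Summable (fun i : ℕ => (((i+N+1:ℕ):ℝ) * c (i+N+1) t)) := by
      have h' := (summable_nat_add_iff (f := fun ℓ : ℕ => (ℓ:ℝ) * c ℓ t) (N+1)).mpr (hsum t ht)
      exact h'.congr (fun i => by simp only [← Nat.add_assoc])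
    have htailmass' : (∑' i : ℕ, ((i+N+1:ℕ):ℝ) * c (i+N+1) t) ≤ 1 := by
      have := htailmass (N+1) t ht
      have e : (∑' i : ℕ, ((i+(N+1):ℕ):ℝ) * c (i+(N+1)) t)
          = ∑' i : ℕ, ((i+N+1:ℕ):ℝ) * c (i+N+1) t :=
        tsum_congr (fun i => by simp only [← Nat.add_assoc])
      linarith
    have hDnn : 0 ≤ D := by positivity
    calc (∑' i : ℕ, bdB a1 zs q (i+N+1) * c (i+N+1) t)
        ≤ ∑' i : ℕ, D * (((i+N+1:ℕ):ℝ) * c (i+N+1) t) :=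
          Summable.tsum_le_tsum hmaj hs1 (hs2.mul_left _)
      _ = D * ∑' i : ℕ, (((i+N+1:ℕ):ℝ) * c (i+N+1) t) := tsum_mul_left
      _ ≤ D * 1 := mul_le_mul_of_nonneg_left htailmass' hDnn
      _ = D := mul_one _
  have hSQcont : ContinuousOn (fun t => ∑' k : ℕ, bdB a1 zs q (k+1) * c (k+1) t)
      (Set.Ici 0) := by
    apply TendstoUniformlyOn.continuousOn
      (F := fun (N : ℕ) (t : ℝ) => ∑ k ∈ Finset.range N, bdB a1 zs q (k+1) * c (k+1) t)
      (p := Filter.atTop)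
    · rw [Metric.tendstoUniformlyOn_iff]
      intro ε hε
      have hlim : Filter.Tendsto (fun N : ℕ => a1 * zs / ((N:ℝ)) ^ ((2:ℝ)/3) + a1 * q / N)
          Filter.atTop (nhds 0) := by
        have l1 : Filter.Tendsto (fun N : ℕ => a1 * zs / ((N:ℝ)) ^ ((2:ℝ)/3))
            Filter.atTop (nhds 0) :=
          Filter.Tendsto.div_atTop tendsto_const_nhds
            ((tendsto_rpow_atTop (by norm_num : (0:ℝ) < (2:ℝ)/3)).comp
              tendsto_natCast_atTop_atTop)
        have l2 : Filter.Tendsto (fun N : ℕ => a1 * q / (N:ℝ)) Filter.atTop (nhds 0) :=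
          Filter.Tendsto.div_atTop tendsto_const_nhds tendsto_natCast_atTop_atTop
        simpa using l1.add l2
      filter_upwards [hlim.eventually (gt_mem_nhds hε), Filter.eventually_ge_atTop 1]
        with N hNε hN1 t ht
      have hsq : Summable (fun k : ℕ => bdB a1 zs q (k+1) * c (k+1) t) :=
        (summable_nat_add_iff (f := fun ℓ : ℕ => bdB a1 zs q ℓ * c ℓ t) 1).mpr (hsumB t ht)
      have htail := Summable.sum_add_tsum_nat_add
        (f := fun k : ℕ => bdB a1 zs q (k+1) * c (k+1) t) N hsq
      have htnn : 0 ≤ ∑' i : ℕ, bdB a1 zs q (i+N+1) * c (i+N+1) t :=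
        tsum_nonneg (fun i => mul_nonneg (hBnn _) (hnn _ t ht))
      rw [Real.dist_eq, abs_sub_comm]
      have heq : (∑ k ∈ Finset.range N, bdB a1 zs q (k+1) * c (k+1) t)
            - (∑' k : ℕ, bdB a1 zs q (k+1) * c (k+1) t)
          = -(∑' i : ℕ, bdB a1 zs q (i+N+1) * c (i+N+1) t) := by
        linarith
      rw [heq, abs_neg, abs_of_nonneg htnn]
      exact lt_of_le_of_lt (htailQ N hN1 t ht) hNε
    · apply Filter.Eventually.frequently
      filter_upwards with N
      apply continuousOn_finset_sum
      intro k _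
      intro t ht
      exact (((continuous_const.mul continuous_id).continuousAt).comp
        (hccont (k+1) t ht)).continuousWithinAt
  have hSQ_le : ∀ (t : ℝ), 0 ≤ t →
      (∑' k : ℕ, bdB a1 zs q (k+1) * c (k+1) t) ≤ a1 * (zs + q) := by
    intro t ht
    have hsq : Summable (fun k : ℕ => bdB a1 zs q (k+1) * c (k+1) t) :=
      (summable_nat_add_iff (f := fun ℓ : ℕ => bdB a1 zs q ℓ * c ℓ t) 1).mpr (hsumB t ht)
    have hs2 : Summable (fun k : ℕ => (((k+1:ℕ):ℝ) * c (k+1) t)) :=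
      (summable_nat_add_iff (f := fun ℓ : ℕ => (ℓ:ℝ) * c ℓ t) 1).mpr (hsum t ht)
    calc (∑' k : ℕ, bdB a1 zs q (k+1) * c (k+1) t)
        ≤ ∑' k : ℕ, (a1 * (zs+q)) * (((k+1:ℕ):ℝ) * c (k+1) t) := by
          apply Summable.tsum_le_tsum _ hsq (hs2.mul_left _)
          intro k
          have := mul_le_mul_of_nonneg_right (hBle (k+1)) (hnn (k+1) t ht)
          calc bdB a1 zs q (k+1) * c (k+1) t
              ≤ (a1 * (zs+q) * ((k+1:ℕ):ℝ)) * c (k+1) t := this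
            _ = (a1 * (zs+q)) * (((k+1:ℕ):ℝ) * c (k+1) t) := by ring
      _ = (a1 * (zs+q)) * ∑' k : ℕ, (((k+1:ℕ):ℝ) * c (k+1) t) := tsum_mul_left
      _ ≤ (a1 * (zs+q)) * 1 := by
          apply mul_le_mul_of_nonneg_left _ (by positivity)
          exact htailmass 1 t ht
      _ = a1 * (zs + q) := mul_one _
  have hJcont : ∀ (k : ℕ), ContinuousOn (fun t => bdJ a1 zs q c1 c k t) (Set.Ici 0) := by
    intro k
    have h1 : ContinuousOn (c k) (Set.Ici 0) :=
      fun t ht => (hccont k t ht).continuousWithinAt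
    have h2 : ContinuousOn (c (k+1)) (Set.Ici 0) :=
      fun t ht => (hccont (k+1) t ht).continuousWithinAt
    exact ((continuousOn_const.mul hc1cont).mul h1).sub (continuousOn_const.mul h2)
  have hJlim : ∀ (t : ℝ), 0 ≤ t →
      Filter.Tendsto (fun N : ℕ => 2 * bdJ a1 zs q c1 c 1 t
        + ∑ k ∈ Finset.range N, (if 2 ≤ k then bdJ a1 zs q c1 c k t else 0))
        Filter.atTop
        (nhds (c1 t * (∑' ℓ : ℕ, bdA a1 ℓ * c ℓ t)
          - (∑' k : ℕ, bdB a1 zs q (k+1) * c (k+1) t) - bdB a1 zs q 2 * c 2 t)) := by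
    intro t ht
    have hP : Summable (fun k : ℕ => bdA a1 k * c1 t * c k t) :=
      ((hsumA t ht).mul_left (c1 t)).congr (fun k => by ring)
    have hQ : Summable (fun k : ℕ => bdB a1 zs q (k+1) * c (k+1) t) :=
      (summable_nat_add_iff (f := fun ℓ : ℕ => bdB a1 zs q ℓ * c ℓ t) 1).mpr (hsumB t ht)
    have hPi : Summable (fun k : ℕ => if 2 ≤ k then bdA a1 k * c1 t * c k t else 0) := by
      apply Summable.of_norm_bounded hP.abs
      intro k
      by_cases h : 2 ≤ k <;> simp [h, le_abs_self, abs_nonneg, abs_mul]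
      positivity
    have hQi : Summable (fun k : ℕ => if 2 ≤ k then bdB a1 zs q (k+1) * c (k+1) t else 0) := by
      apply Summable.of_norm_bounded hQ.abs
      intro k
      by_cases h : 2 ≤ k <;> simp [h, le_abs_self, abs_nonneg, abs_mul]
      positivity
    have hJeq : ∀ k : ℕ, (if 2 ≤ k then bdJ a1 zs q c1 c k t else 0)
        = (if 2 ≤ k then bdA a1 k * c1 t * c k t else 0)
          - (if 2 ≤ k then bdB a1 zs q (k+1) * c (k+1) t else 0) := by
      intro k
      by_cases h : 2 ≤ k <;> simp [h, bdJ]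
    have hJsum : Summable (fun k : ℕ => if 2 ≤ k then bdJ a1 zs q c1 c k t else 0) :=
      ((hPi.sub hQi).congr (fun k => (hJeq k).symm))
    have hPval : (∑' k : ℕ, (if 2 ≤ k then bdA a1 k * c1 t * c k t else 0))
        = c1 t * (∑' ℓ : ℕ, bdA a1 ℓ * c ℓ t) := by
      rw [← tsum_mul_left]
      apply tsum_congr
      intro k
      match k with
      | 0 => simp [hA0]
      | 1 => simp [hc1 t]
      | (n+2) => have h : 2 ≤ n+2 := by omega
                 simp [h]; ring
    have hQval : (∑' k : ℕ, (if 2 ≤ k then bdB a1 zs q (k+1) * c (k+1) t else 0))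
        = (∑' k : ℕ, bdB a1 zs q (k+1) * c (k+1) t) - bdB a1 zs q 2 * c 2 t := by
      have e1 := Summable.sum_add_tsum_nat_add
        (f := fun k : ℕ => if 2 ≤ k then bdB a1 zs q (k+1) * c (k+1) t else 0) 2 hQi
      have e2 := Summable.sum_add_tsum_nat_add
        (f := fun k : ℕ => bdB a1 zs q (k+1) * c (k+1) t) 2 hQ
      have e3 : (∑' i : ℕ, (if 2 ≤ i+2 then bdB a1 zs q (i+2+1) * c (i+2+1) t else 0))
          = ∑' i : ℕ, bdB a1 zs q (i+2+1) * c (i+2+1) t :=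
        tsum_congr (fun i => by simp)
      have e4 : (∑ k ∈ Finset.range 2, (if 2 ≤ k then bdB a1 zs q (k+1) * c (k+1) t else 0)) = 0 := by
        simp [Finset.sum_range_succ]
      have e5 : (∑ k ∈ Finset.range 2, bdB a1 zs q (k+1) * c (k+1) t)
          = bdB a1 zs q 2 * c 2 t := by
        simp [Finset.sum_range_succ, hc1 t]
      linarith
    have hsums := hJsum.hasSum.tendsto_sum_nat
    have hw1 : bdJ a1 zs q c1 c 1 t = -(bdB a1 zs q 2 * c 2 t) := by
      simp [bdJ, hc1 t]
    have hval : (∑' k : ℕ, (if 2 ≤ k then bdJ a1 zs q c1 c k t else 0))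
        = c1 t * (∑' ℓ : ℕ, bdA a1 ℓ * c ℓ t)
          - (∑' k : ℕ, bdB a1 zs q (k+1) * c (k+1) t) + bdB a1 zs q 2 * c 2 t := by
      rw [tsum_congr hJeq, Summable.tsum_sub hPi hQi, hPval, hQval]; ring
    have hfin := (tendsto_const_nhds
      (x := 2 * bdJ a1 zs q c1 c 1 t) (f := Filter.atTop (α := ℕ))).add hsums
    rw [hval] at hfin
    have : 2 * bdJ a1 zs q c1 c 1 t
        + (c1 t * (∑' ℓ : ℕ, bdA a1 ℓ * c ℓ t)
          - (∑' k : ℕ, bdB a1 zs q (k+1) * c (k+1) t) + bdB a1 zs q 2 * c 2 t)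
        = c1 t * (∑' ℓ : ℕ, bdA a1 ℓ * c ℓ t)
          - (∑' k : ℕ, bdB a1 zs q (k+1) * c (k+1) t) - bdB a1 zs q 2 * c 2 t := by
      rw [hw1]; ring
    rw [this] at hfin
    exact hfin
  set Sf : ℝ → ℝ := fun t => c1 t * (∑' ℓ : ℕ, bdA a1 ℓ * c ℓ t)
    - (∑' k : ℕ, bdB a1 zs q (k+1) * c (k+1) t) - bdB a1 zs q 2 * c 2 t with hSf_def
  set FN : ℕ → ℝ → ℝ := fun N t => 2 * bdJ a1 zs q c1 c 1 t
    + ∑ k ∈ Finset.range N, (if 2 ≤ k then bdJ a1 zs q c1 c k t else 0) with hFN_def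
  -- continuity of each FN on Ici 0
  have hFN_cont : ∀ N : ℕ, ContinuousOn (FN N) (Set.Ici 0) := by
    intro N
    apply ContinuousOn.add
    · exact continuousOn_const.mul (hJcont 1)
    · apply continuousOn_finset_sum
      intro k _
      by_cases h : 2 ≤ k
      · simpa [h] using hJcont k
      · simpa [h] using continuousOn_const (c := (0:ℝ)) (s := Set.Ici (0:ℝ))
  -- FTC for FN
  have hFTCN : ∀ T : ℝ, 0 ≤ T → ∀ N : ℕ, 2 ≤ N →
      (∫ t in (0:ℝ)..T, FN N t)
        = ((∑ k ∈ Finset.range (N+1), (k:ℝ) * c k T)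
            - (∑ k ∈ Finset.range (N+1), (k:ℝ) * c k 0))
          + (N:ℝ) * (((∑' ℓ : ℕ, c ℓ T) - ∑ k ∈ Finset.range (N+1), c k T)
            - ((∑' ℓ : ℕ, c ℓ 0) - ∑ k ∈ Finset.range (N+1), c k 0)) := by
    intro T hT N hN
    have hw1 : ∀ t : ℝ, bdJ a1 zs q c1 c 1 t = -(bdB a1 zs q 2 * c 2 t) := by
      intro t; simp [bdJ, hc1 t]
    have huder : ∀ t ∈ Set.uIcc (0:ℝ) T,
        HasDerivAt (fun s => (∑ k ∈ Finset.range (N+1), (k:ℝ) * c k s)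
          + (N:ℝ) * ((∑' ℓ : ℕ, c ℓ s) - ∑ k ∈ Finset.range (N+1), c k s)) (FN N t) t := by
      intro t htmem
      rw [Set.uIcc_of_le hT] at htmem
      have ht : 0 ≤ t := htmem.1
      have h1 := hmass_deriv N hN t ht
      have h2 : HasDerivAt (fun s => (∑' ℓ : ℕ, c ℓ s) - ∑ k ∈ Finset.range (N+1), c k s)
          (bdJ a1 zs q c1 c N t) t := by
        have : HasDerivAt (fun s => (∑' ℓ : ℕ, c ℓ s) - ∑ k ∈ Finset.range (N+1), c k s) _ t := (hg' t ht).sub (hcount_deriv N hN t ht)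
        convert this using 1
        rw [hw1 t]; ring
      have : HasDerivAt (fun s => (∑ k ∈ Finset.range (N+1), (k:ℝ) * c k s)
          + (N:ℝ) * ((∑' ℓ : ℕ, c ℓ s) - ∑ k ∈ Finset.range (N+1), c k s)) _ t := h1.add (h2.const_mul (N:ℝ))
      convert this using 1
      simp only [hFN_def]
      ring
    have hint : IntervalIntegrable (FN N) MeasureTheory.volume 0 T := by
      apply ContinuousOn.intervalIntegrable
      apply (hFN_cont N).mono
      rw [Set.uIcc_of_le hT]
      intro x hx; exact hx.1
    have := intervalIntegral.integral_eq_sub_of_hasDerivAt huder hint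
    rw [this]
    ring
  -- limit of the right-hand side
  have hmassTend : ∀ t : ℝ, 0 ≤ t →
      Filter.Tendsto (fun N : ℕ => ∑ k ∈ Finset.range (N+1), (k:ℝ) * c k t)
        Filter.atTop (nhds 1) := by
    intro t ht
    have := (hsum t ht).hasSum.tendsto_sum_nat
    rw [hcons t ht] at this
    exact this.comp (Filter.tendsto_add_atTop_nat 1)
  have hNtau : ∀ t : ℝ, 0 ≤ t →
      Filter.Tendsto (fun N : ℕ => (N:ℝ) *
        ((∑' ℓ : ℕ, c ℓ t) - ∑ k ∈ Finset.range (N+1), c k t))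
        Filter.atTop (nhds 0) := by
    intro t ht
    apply squeeze_zero
    · intro N
      rw [htail_count (N+1) t ht]
      exact mul_nonneg (Nat.cast_nonneg N) (tsum_nonneg (fun i => hnn _ t ht))
    · intro N
      show (N:ℝ) * _ ≤ 1 - ∑ k ∈ Finset.range (N+1), (k:ℝ) * c k t
      rw [htail_count (N+1) t ht]
      have step1 : (N:ℝ) * (∑' i : ℕ, c (i+(N+1)) t)
          ≤ ((N+1:ℕ):ℝ) * (∑' i : ℕ, c (i+(N+1)) t) := by
        apply mul_le_mul_of_nonneg_right _ (tsum_nonneg (fun i => hnn _ t ht))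
        push_cast; linarith
      have step2 := htail_count_le (N+1) t ht
      have step3 : (∑' i : ℕ, ((i+(N+1):ℕ):ℝ) * c (i+(N+1)) t)
          = 1 - ∑ k ∈ Finset.range (N+1), (k:ℝ) * c k t := by
        have := Summable.sum_add_tsum_nat_add (f := fun ℓ : ℕ => (ℓ:ℝ) * c ℓ t) (N+1) (hsum t ht)
        rw [hcons t ht] at this
        linarith
      rw [step3] at step2
      linarith
    · have := hmassTend t ht
      have : Filter.Tendsto (fun N : ℕ => 1 - ∑ k ∈ Finset.range (N+1), (k:ℝ) * c k t)
          Filter.atTop (nhds (1 - 1)) := tendsto_const_nhds.sub this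
      simpa using this
  -- the integral of Sf vanishes
  have hIntS : ∀ T : ℝ, 0 ≤ T → (∫ t in (0:ℝ)..T, Sf t) = 0 := by
    intro T hT
    -- dominated convergence
    have huIoc : Set.uIoc (0:ℝ) T = Set.Ioc 0 T := Set.uIoc_of_le hT
    have hsub : Set.Ioc (0:ℝ) T ⊆ Set.Ici 0 := fun x hx => le_of_lt hx.1
    have hDCT : Filter.Tendsto (fun N : ℕ => ∫ t in (0:ℝ)..T, FN N t)
        Filter.atTop (nhds (∫ t in (0:ℝ)..T, Sf t)) := by
      apply intervalIntegral.tendsto_integral_filter_of_dominated_convergence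
        (bound := fun t => bdB a1 zs q 2 + (|c1 t| * a1 + a1 * (zs + q)))
      · apply Filter.Eventually.of_forall
        intro N
        apply ContinuousOn.aestronglyMeasurable _ measurableSet_uIoc
        rw [huIoc]
        exact (hFN_cont N).mono hsub
      · apply Filter.Eventually.of_forall
        intro N
        apply MeasureTheory.ae_of_all
        intro t htmem
        rw [huIoc] at htmem
        have ht : (0:ℝ) ≤ t := hsub htmem
        -- pointwise bound
        have hb1 : |2 * bdJ a1 zs q c1 c 1 t| ≤ bdB a1 zs q 2 := by
          have : bdJ a1 zs q c1 c 1 t = -(bdB a1 zs q 2 * c 2 t) := by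
            simp [bdJ, hc1 t]
          rw [this]
          have h2 := hc2_le t ht
          have hpos := mul_nonneg (hBnn 2) (hnn 2 t ht)
          rw [abs_of_nonpos (by linarith : 2 * -(bdB a1 zs q 2 * c 2 t) ≤ 0)]
          nlinarith [hBnn 2, hnn 2 t ht, hc2_le t ht]
        have hb2 : |∑ k ∈ Finset.range N, (if 2 ≤ k then bdJ a1 zs q c1 c k t else 0)|
            ≤ |c1 t| * a1 + a1 * (zs + q) := by
          have habs : ∀ k : ℕ, |(if 2 ≤ k then bdJ a1 zs q c1 c k t else 0)|
              ≤ |c1 t| * (bdA a1 k * c k t) + bdB a1 zs q (k+1) * c (k+1) t := by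
            intro k
            have hnn1 := mul_nonneg (hAnn k) (hnn k t ht)
            have hnn2 := mul_nonneg (hBnn (k+1)) (hnn (k+1) t ht)
            by_cases h : 2 ≤ k
            · simp only [if_pos h, bdJ]
              refine (abs_sub _ _).trans ?_
              gcongr
              · rw [abs_mul, abs_mul]
                rw [abs_of_nonneg (hAnn k), abs_of_nonneg (hnn k t ht)]
                calc bdA a1 k * |c1 t| * c k t = |c1 t| * (bdA a1 k * c k t) := by ring
                  _ ≤ |c1 t| * (bdA a1 k * c k t) := le_refl _
              · rw [abs_of_nonneg hnn2]
            · simp only [if_neg h, abs_zero]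
              positivity
          calc |∑ k ∈ Finset.range N, (if 2 ≤ k then bdJ a1 zs q c1 c k t else 0)|
              ≤ ∑ k ∈ Finset.range N, |(if 2 ≤ k then bdJ a1 zs q c1 c k t else 0)| :=
                Finset.abs_sum_le_sum_abs _ _
            _ ≤ ∑ k ∈ Finset.range N, (|c1 t| * (bdA a1 k * c k t)
                  + bdB a1 zs q (k+1) * c (k+1) t) :=
                Finset.sum_le_sum (fun k _ => habs k)
            _ = (∑ k ∈ Finset.range N, |c1 t| * (bdA a1 k * c k t))
                  + ∑ k ∈ Finset.range N, bdB a1 zs q (k+1) * c (k+1) t :=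
                Finset.sum_add_distrib
            _ ≤ |c1 t| * a1 + a1 * (zs + q) := by
                gcongr
                · have h1 : (∑ k ∈ Finset.range N, |c1 t| * (bdA a1 k * c k t))
                      = |c1 t| * ∑ k ∈ Finset.range N, (bdA a1 k * c k t) := by
                    rw [Finset.mul_sum]
                  rw [h1]
                  apply mul_le_mul_of_nonneg_left _ (abs_nonneg _)
                  calc (∑ k ∈ Finset.range N, bdA a1 k * c k t)
                      ≤ ∑' ℓ : ℕ, bdA a1 ℓ * c ℓ t := by
                        apply Summable.sum_le_tsum _ _ (hsumA t ht)
                        intro k _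
                        exact mul_nonneg (hAnn k) (hnn k t ht)
                    _ ≤ a1 := hSA_le t ht
                · calc (∑ k ∈ Finset.range N, bdB a1 zs q (k+1) * c (k+1) t)
                      ≤ ∑' k : ℕ, bdB a1 zs q (k+1) * c (k+1) t := by
                        apply Summable.sum_le_tsum _ _
                          ((summable_nat_add_iff
                            (f := fun ℓ : ℕ => bdB a1 zs q ℓ * c ℓ t) 1).mpr (hsumB t ht))
                        intro k _
                        exact mul_nonneg (hBnn (k+1)) (hnn (k+1) t ht)
                    _ ≤ a1 * (zs + q) := hSQ_le t ht
        calc ‖FN N t‖ = |FN N t| := rfl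
          _ ≤ |2 * bdJ a1 zs q c1 c 1 t|
              + |∑ k ∈ Finset.range N, (if 2 ≤ k then bdJ a1 zs q c1 c k t else 0)| :=
            abs_add_le _ _
          _ ≤ bdB a1 zs q 2 + (|c1 t| * a1 + a1 * (zs + q)) := add_le_add hb1 hb2
      · apply ContinuousOn.intervalIntegrable
        have : Set.uIcc (0:ℝ) T ⊆ Set.Ici 0 := by
          rw [Set.uIcc_of_le hT]; intro x hx; exact hx.1
        exact (continuousOn_const.add ((hc1cont.abs.mul continuousOn_const).add
          continuousOn_const)).mono this
      · apply MeasureTheory.ae_of_all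
        intro t htmem
        rw [huIoc] at htmem
        exact hJlim t (hsub htmem)
    -- the other limit
    have hRlim : Filter.Tendsto (fun N : ℕ => ∫ t in (0:ℝ)..T, FN N t)
        Filter.atTop (nhds 0) := by
      have heq : (fun N : ℕ => ∫ t in (0:ℝ)..T, FN N t) =ᶠ[Filter.atTop]
          (fun N : ℕ => ((∑ k ∈ Finset.range (N+1), (k:ℝ) * c k T)
            - (∑ k ∈ Finset.range (N+1), (k:ℝ) * c k 0))
          + ((N:ℝ) * ((∑' ℓ : ℕ, c ℓ T) - ∑ k ∈ Finset.range (N+1), c k T)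
            - (N:ℝ) * ((∑' ℓ : ℕ, c ℓ 0) - ∑ k ∈ Finset.range (N+1), c k 0))) := by
        filter_upwards [Filter.eventually_ge_atTop 2] with N hN
        rw [hFTCN T hT N hN]
        ring
      rw [Filter.tendsto_congr' heq]
      have l1 := (hmassTend T hT).sub (hmassTend 0 le_rfl)
      have l2 := (hNtau T hT).sub (hNtau 0 le_rfl)
      have := l1.add l2
      simpa using this
    exact tendsto_nhds_unique hDCT hRlim
  have hSf0 : ∀ T : ℝ, 0 ≤ T → Sf T = 0 := by
    have hSfcont : ContinuousOn Sf (Set.Ici 0) := by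
      rw [hSf_def]
      apply ContinuousOn.sub
      · apply ContinuousOn.sub
        · exact hc1cont.mul hSAcont
        · exact hSQcont
      · exact continuousOn_const.mul (fun t ht => (hccont 2 t ht).continuousWithinAt)
    intro T hT
    by_contra hne
    have hεpos : 0 < |Sf T| / 2 := by positivity
    have hcw : ContinuousWithinAt Sf (Set.Ici 0) T := hSfcont T hT
    rw [Metric.continuousWithinAt_iff] at hcw
    obtain ⟨δ, hδpos, hδ⟩ := hcw (|Sf T| / 2) hεpos
    set h0 : ℝ := δ / 2 with hh0
    have hh0pos : 0 < h0 := by positivity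
    have hint1 : IntervalIntegrable Sf MeasureTheory.volume 0 T := by
      apply ContinuousOn.intervalIntegrable
      apply hSfcont.mono
      rw [Set.uIcc_of_le hT]
      exact fun x hx => hx.1
    have hint2 : IntervalIntegrable Sf MeasureTheory.volume T (T + h0) := by
      apply ContinuousOn.intervalIntegrable
      apply hSfcont.mono
      rw [Set.uIcc_of_le (by linarith : T ≤ T + h0)]
      exact fun x hx => le_trans hT hx.1
    have hIseg : (∫ t in T..(T+h0), Sf t) = 0 := by
      have := intervalIntegral.integral_add_adjacent_intervals hint1 hint2
      rw [hIntS T hT, hIntS (T+h0) (by linarith)] at this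
      linarith
    have hbd : ∀ u ∈ Set.uIoc T (T+h0), ‖Sf u - Sf T‖ ≤ |Sf T| / 2 := by
      intro u hu
      rw [Set.uIoc_of_le (by linarith : T ≤ T + h0)] at hu
      have hu1 : 0 ≤ u := le_trans hT hu.1.le
      have hu2 : dist u T < δ := by
        rw [Real.dist_eq, abs_of_nonneg (by linarith [hu.1.le] : 0 ≤ u - T)]
        have := hu.2
        simp only [hh0] at this ⊢
        linarith
      exact (hδ hu1 hu2).le
    have hest := intervalIntegral.norm_integral_le_of_norm_le_const hbd
    have heval : (∫ u in T..(T+h0), (Sf u - Sf T)) = -(h0 * Sf T) := by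
      rw [intervalIntegral.integral_sub hint2 intervalIntegrable_const, hIseg,
        intervalIntegral.integral_const]
      simp
    rw [heval] at hest
    rw [Real.norm_eq_abs] at hest
    have e1 : |T + h0 - T| = h0 := by
      rw [show T + h0 - T = h0 by ring]
      exact abs_of_pos hh0pos
    rw [e1] at hest
    have e2 : |(-(h0 * Sf T))| = h0 * |Sf T| := by
      rw [abs_neg, abs_mul, abs_of_pos hh0pos]
    rw [e2] at hest
    have hhalf : |Sf T| ≤ |Sf T| / 2 := by
      nlinarith [hest, hh0pos]
    have : |Sf T| ≤ 0 := by linarith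
    exact hne (abs_eq_zero.mp (le_antisymm this (abs_nonneg _)))
  have hSf0' : ∀ T : ℝ, 0 ≤ T → c1 T * (∑' ℓ : ℕ, bdA a1 ℓ * c ℓ T)
      - (∑' k : ℕ, bdB a1 zs q (k+1) * c (k+1) T) - bdB a1 zs q 2 * c 2 T = 0 := by
    intro T hT
    have h := hSf0 T hT
    rw [hSf_def] at h
    exact h
  -- strict positivity of c 2 on (0, ∞)
  have hc2pos : ∀ t : ℝ, 0 < t → 0 < c 2 t := by
    intro t0 ht0
    rcases lt_or_eq_of_le (hnn 2 t0 ht0.le) with h | h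
    · exact h
    -- assume c 2 t0 = 0 and derive a contradiction
    exfalso
    have h2 : c 2 t0 = 0 := h.symm
    have hall : ∀ n : ℕ, c (n+1) t0 = 0 ∧ c (n+2) t0 = 0 := by
      intro n
      induction n with
      | zero => exact ⟨hc1 t0, h2⟩
      | succ n ih =>
        refine ⟨ih.2, ?_⟩
        -- c (n+2) has a local minimum at t0
        have hmin : IsLocalMin (c (n+2)) t0 := by
          have hev : ∀ᶠ u in nhds t0, 0 ≤ u :=
            (eventually_ge_nhds ht0 : ∀ᶠ u in nhds t0, (0:ℝ) ≤ u)
          filter_upwards [hev] with u hu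
          rw [ih.2]
          exact hnn (n+2) u hu
        have hD := hmin.hasDerivAt_eq_zero (hODE (n+2) (by omega) t0 ht0.le)
        -- simplify the derivative using the vanishing of c (n+1), c (n+2)
        have : bdJ a1 zs q c1 c (n+2-1) t0 - bdJ a1 zs q c1 c (n+2) t0
            = bdB a1 zs q (n+3) * c (n+3) t0 := by
          have e : n+2-1 = n+1 := by omega
          rw [e]
          simp [bdJ, ih.1, ih.2]
        rw [this] at hD
        have hBp := hBpos (n+3) (by omega)
        have := hnn (n+3) t0 ht0.le
        by_contra hne
        have : 0 < bdB a1 zs q (n+3) * c (n+3) t0 :=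
          mul_pos hBp (lt_of_le_of_ne this (Ne.symm hne))
        linarith
    -- all coefficients vanish at t0, contradicting the conservation law
    have hzero : ∀ k : ℕ, (k:ℝ) * c k t0 = 0 := by
      intro k
      match k with
      | 0 => simp [hc0 t0]
      | 1 => simp [hc1 t0]
      | (n+2) => rw [(hall n).2]; ring
    have : (∑' ℓ : ℕ, (ℓ:ℝ) * c ℓ t0) = 0 := by
      have : (fun ℓ : ℕ => (ℓ:ℝ) * c ℓ t0) = fun _ => 0 := funext hzero
      rw [this, tsum_zero]
    rw [hcons t0 ht0.le] at this
    norm_num at this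
  -- strict antitonicity
  have hSA : StrictAntiOn (fun t => ∑' ℓ : ℕ, c ℓ t) (Set.Ici 0) := by
    intro s hs t ht hst
    simp only [Set.mem_Ici] at hs ht
    have hcont2 : ContinuousOn (fun u => bdB a1 zs q 2 * c 2 u) (Set.uIcc s t) := by
      rw [Set.uIcc_of_le hst.le]
      intro u hu
      exact (continuousAt_const.mul (hccont 2 u (le_trans hs hu.1))).continuousWithinAt
    have hint : IntervalIntegrable (fun u => bdB a1 zs q 2 * c 2 u)
        MeasureTheory.volume s t := hcont2.intervalIntegrable
    have hFTC := intervalIntegral.integral_eq_sub_of_hasDerivAt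
      (f := fun u => ∑' ℓ : ℕ, c ℓ u)
      (f' := fun u => -(bdB a1 zs q 2 * c 2 u))
      (fun u hu => by
        rw [Set.uIcc_of_le hst.le] at hu
        exact hg' u (le_trans hs hu.1))
      hint.neg
    have hpos : 0 < ∫ u in s..t, bdB a1 zs q 2 * c 2 u := by
      apply intervalIntegral.intervalIntegral_pos_of_pos_on hint
      · intro x hx
        exact mul_pos (hBpos 2 (by omega)) (hc2pos x (lt_of_le_of_lt hs hx.1))
      · exact hst
    have : (∫ u in s..t, -(bdB a1 zs q 2 * c 2 u)) = -(∫ u in s..t, bdB a1 zs q 2 * c 2 u) :=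
      intervalIntegral.integral_neg
    rw [this] at hFTC
    have : (∑' ℓ : ℕ, c ℓ t) - (∑' ℓ : ℕ, c ℓ s) < 0 := by
      rw [← hFTC]; linarith
    simp only
    linarith
  have hB2 := hBpos 2 (by omega)
  -- the key claim: the count cannot stay above any positive level
  have hkey : ∀ γ : ℝ, 0 < γ → ¬ (∀ t : ℝ, 0 ≤ t → γ ≤ ∑' ℓ : ℕ, c ℓ t) := by
    intro γ hγ hγle
    -- lower bound on ΣA
    have hSA_ge : ∀ t : ℝ, 0 ≤ t → a1 * γ ≤ ∑' ℓ : ℕ, bdA a1 ℓ * c ℓ t := by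
      intro t ht
      have h1 : (∑' ℓ : ℕ, a1 * c ℓ t) ≤ ∑' ℓ : ℕ, bdA a1 ℓ * c ℓ t := by
        apply Summable.tsum_le_tsum _ ((hsum0 t ht).mul_left a1) (hsumA t ht)
        intro k
        match k with
        | 0 => simp [hc0 t]
        | (n+1) =>
          apply mul_le_mul_of_nonneg_right _ (hnn (n+1) t ht)
          have h1 : (1:ℝ) ≤ ((n+1:ℕ):ℝ) := by exact_mod_cast Nat.succ_le_succ (Nat.zero_le n)
          have : (1:ℝ) ≤ ((n+1:ℕ):ℝ) ^ ((1:ℝ)/3) :=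
            Real.one_le_rpow h1 (by norm_num)
          unfold bdA
          nlinarith
      rw [tsum_mul_left] at h1
      have := hγle t ht
      nlinarith
    -- uniform bound on c1
    set K : ℝ := (a1 * (zs + q) + bdB a1 zs q 2) / (a1 * γ) with hK
    have hKnn : 0 ≤ K := by positivity
    have hc1K : ∀ t : ℝ, 0 ≤ t → c1 t ≤ K := by
      intro t ht
      have h0 := hSf0' t ht
      have hupper : c1 t * (∑' ℓ : ℕ, bdA a1 ℓ * c ℓ t)
          ≤ a1 * (zs + q) + bdB a1 zs q 2 := by
        have h2 := hSQ_le t ht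
        have h3 := hc2_le t ht
        have h4 : 0 ≤ bdB a1 zs q 2 := hB2.le
        nlinarith [hnn 2 t ht]
      rcases le_or_gt (c1 t) 0 with h | h
      · exact le_trans h hKnn
      · rw [hK, le_div_iff₀ (by positivity)]
        calc c1 t * (a1 * γ) ≤ c1 t * (∑' ℓ : ℕ, bdA a1 ℓ * c ℓ t) :=
            mul_le_mul_of_nonneg_left (hSA_ge t ht) h.le
          _ ≤ a1 * (zs + q) + bdB a1 zs q 2 := hupper
    -- integral bounds for each c L, L ≥ 2
    have hC : ∀ L : ℕ, 2 ≤ L → ∃ C : ℝ, 0 ≤ C ∧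
        ∀ T : ℝ, 0 ≤ T → (∫ t in (0:ℝ)..T, c L t) ≤ C := by
      intro L hL
      induction L, hL using Nat.le_induction with
      | base =>
        refine ⟨1 / bdB a1 zs q 2, by positivity, ?_⟩
        intro T hT
        have hsubIcc : Set.uIcc (0:ℝ) T ⊆ Set.Ici 0 := by
          rw [Set.uIcc_of_le hT]; exact fun x hx => hx.1
        have hcont2 : ContinuousOn (fun u => bdB a1 zs q 2 * c 2 u) (Set.uIcc (0:ℝ) T) :=
          fun u hu => (continuousAt_const.mul (hccont 2 u (hsubIcc hu))).continuousWithinAt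
        have hint : IntervalIntegrable (fun u => bdB a1 zs q 2 * c 2 u)
            MeasureTheory.volume 0 T := hcont2.intervalIntegrable
        have hFTC := intervalIntegral.integral_eq_sub_of_hasDerivAt
          (f := fun u => ∑' ℓ : ℕ, c ℓ u)
          (f' := fun u => -(bdB a1 zs q 2 * c 2 u))
          (fun u hu => hg' u (hsubIcc hu)) hint.neg
        rw [intervalIntegral.integral_neg] at hFTC
        have h1 : (∫ u in (0:ℝ)..T, bdB a1 zs q 2 * c 2 u) ≤ 1 := by
          have e1 := hg_le_one 0 le_rfl
          have e2 := hg_nonneg T hT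
          linarith
        have h2 : (∫ u in (0:ℝ)..T, bdB a1 zs q 2 * c 2 u)
            = bdB a1 zs q 2 * ∫ u in (0:ℝ)..T, c 2 u := by
          rw [← intervalIntegral.integral_const_mul]
        rw [h2] at h1
        rw [le_div_iff₀ hB2]
        linarith [h1]
      | succ L hL ih =>
        obtain ⟨C, hCnn, hCb⟩ := ih
        have hBL1 := hBpos (L+1) (by omega)
        have hnum : 0 ≤ bdA a1 L * K * C + 2 := by
          have := mul_nonneg (mul_nonneg (hAnn L) hKnn) hCnn
          linarith
        refine ⟨(bdA a1 L * K * C + 2) / bdB a1 zs q (L+1), div_nonneg hnum hBL1.le, ?_⟩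
        intro T hT
        have hsubIcc : Set.uIcc (0:ℝ) T ⊆ Set.Ici 0 := by
          rw [Set.uIcc_of_le hT]; exact fun x hx => hx.1
        -- tau L
        have htauD : ∀ t : ℝ, 0 ≤ t → HasDerivAt
            (fun s => (∑' ℓ : ℕ, c ℓ s) - ∑ k ∈ Finset.range (L+1), c k s)
            (bdJ a1 zs q c1 c L t) t := by
          intro t ht
          have : HasDerivAt (fun s => (∑' ℓ : ℕ, c ℓ s) - ∑ k ∈ Finset.range (L+1), c k s) _ t := (hg' t ht).sub (hcount_deriv L hL t ht)
          convert this using 1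
          have hw1 : bdJ a1 zs q c1 c 1 t = -(bdB a1 zs q 2 * c 2 t) := by
            simp [bdJ, hc1 t]
          rw [hw1]; ring
        have hJc : ContinuousOn (fun t => bdJ a1 zs q c1 c L t) (Set.Ici 0) := by
          have h1 : ContinuousOn (c L) (Set.Ici 0) :=
            fun u hu => (hccont L u hu).continuousWithinAt
          have h2 : ContinuousOn (c (L+1)) (Set.Ici 0) :=
            fun u hu => (hccont (L+1) u hu).continuousWithinAt
          exact ((continuousOn_const.mul hc1cont).mul h1).sub (continuousOn_const.mul h2)
        have hintJ : IntervalIntegrable (fun t => bdJ a1 zs q c1 c L t)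
            MeasureTheory.volume 0 T := (hJc.mono hsubIcc).intervalIntegrable
        have hFTC := intervalIntegral.integral_eq_sub_of_hasDerivAt
          (f := fun s => (∑' ℓ : ℕ, c ℓ s) - ∑ k ∈ Finset.range (L+1), c k s)
          (f' := fun t => bdJ a1 zs q c1 c L t)
          (fun u hu => htauD u (hsubIcc hu)) hintJ
        -- tau is between 0 and 1
        have htau01 : ∀ t : ℝ, 0 ≤ t →
            0 ≤ (∑' ℓ : ℕ, c ℓ t) - (∑ k ∈ Finset.range (L+1), c k t) ∧
            (∑' ℓ : ℕ, c ℓ t) - (∑ k ∈ Finset.range (L+1), c k t) ≤ 1 := by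
          intro t ht
          constructor
          · rw [htail_count (L+1) t ht]
            exact tsum_nonneg (fun i => hnn _ t ht)
          · have h1 : 0 ≤ ∑ k ∈ Finset.range (L+1), c k t :=
              Finset.sum_nonneg (fun k _ => hnn k t ht)
            linarith [hg_le_one t ht]
        -- integrability of the two pieces
        have hcLint : IntervalIntegrable (c L) MeasureTheory.volume 0 T := by
          apply ContinuousOn.intervalIntegrable
          intro u hu
          exact (hccont L u (hsubIcc hu)).continuousWithinAt
        have hcL1int : IntervalIntegrable (c (L+1)) MeasureTheory.volume 0 T := by
          apply ContinuousOn.intervalIntegrable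
          intro u hu
          exact (hccont (L+1) u (hsubIcc hu)).continuousWithinAt
        have hprod_int : IntervalIntegrable (fun t => bdA a1 L * c1 t * c L t)
            MeasureTheory.volume 0 T := by
          apply ContinuousOn.intervalIntegrable
          apply ContinuousOn.mono _ hsubIcc
          exact (continuousOn_const.mul hc1cont).mul
            (fun u hu => (hccont L u hu).continuousWithinAt)
        -- bound the drift integral
        have hdrift : (∫ t in (0:ℝ)..T, bdA a1 L * c1 t * c L t)
            ≤ bdA a1 L * K * C := by
          have hmono := intervalIntegral.integral_mono_on hT hprod_int
            ((hcLint.const_mul (bdA a1 L * K))) ?_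
          · calc (∫ t in (0:ℝ)..T, bdA a1 L * c1 t * c L t)
                ≤ ∫ t in (0:ℝ)..T, bdA a1 L * K * c L t := hmono
              _ = bdA a1 L * K * ∫ t in (0:ℝ)..T, c L t := by
                  rw [← intervalIntegral.integral_const_mul]
              _ ≤ bdA a1 L * K * C := by
                  apply mul_le_mul_of_nonneg_left (hCb T hT)
                  exact mul_nonneg (hAnn L) hKnn
          · intro t htmem
            have ht : 0 ≤ t := htmem.1
            have := mul_le_mul_of_nonneg_right (hc1K t ht) (hnn L t ht)
            calc bdA a1 L * c1 t * c L t = (c1 t * c L t) * bdA a1 L := by ring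
              _ ≤ (K * c L t) * bdA a1 L := by
                  apply mul_le_mul_of_nonneg_right _ (hAnn L)
                  nlinarith
              _ = bdA a1 L * K * c L t := by ring
        -- split the flux integral
        have hsplit : (∫ t in (0:ℝ)..T, bdJ a1 zs q c1 c L t)
            = (∫ t in (0:ℝ)..T, bdA a1 L * c1 t * c L t)
              - bdB a1 zs q (L+1) * ∫ t in (0:ℝ)..T, c (L+1) t := by
          have : (fun t => bdJ a1 zs q c1 c L t)
              = fun t => bdA a1 L * c1 t * c L t - bdB a1 zs q (L+1) * c (L+1) t := by
            funext t; rfl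
          rw [this, intervalIntegral.integral_sub hprod_int (hcL1int.const_mul _),
            intervalIntegral.integral_const_mul]
        -- conclude
        have hτT := htau01 T hT
        have hτ0 := htau01 0 le_rfl
        rw [hsplit] at hFTC
        have hFTC' : (∫ t in (0:ℝ)..T, bdA a1 L * c1 t * c L t)
              - bdB a1 zs q (L+1) * (∫ t in (0:ℝ)..T, c (L+1) t)
            = ((∑' ℓ : ℕ, c ℓ T) - ∑ k ∈ Finset.range (L+1), c k T)
              - ((∑' ℓ : ℕ, c ℓ 0) - ∑ k ∈ Finset.range (L+1), c k 0) := hFTC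
        rw [le_div_iff₀ hBL1]
        have hcomm : (∫ t in (0:ℝ)..T, c (L+1) t) * bdB a1 zs q (L+1)
            = bdB a1 zs q (L+1) * (∫ t in (0:ℝ)..T, c (L+1) t) := mul_comm _ _
        rw [hcomm]
        linarith [hτT.1, hτT.2, hτ0.1, hτ0.2, hdrift, hFTC']
    -- choose the cutoff level
    obtain ⟨L0, hL0⟩ := exists_nat_gt (2 / γ)
    set L : ℕ := L0 + 2 with hLdef
    have hL2 : 2 ≤ L := by omega
    have hLbig : 2 / γ < ((L+1:ℕ):ℝ) := by
      have : (L0:ℝ) ≤ ((L+1:ℕ):ℝ) := by exact_mod_cast (by omega : L0 ≤ L+1)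
      push_cast at this ⊢
      linarith
    -- the partial count is at least γ/2 for all times
    have hlow : ∀ t : ℝ, 0 ≤ t → γ/2 ≤ ∑ k ∈ Finset.range (L+1), c k t := by
      intro t ht
      have h1 := htail_count (L+1) t ht
      have h2 := htail_count_le (L+1) t ht
      have h3 := htailmass (L+1) t ht
      have h4 := hγle t ht
      -- tail ≤ 1/(L+1)
      have htau_le : (∑' i : ℕ, c (i+(L+1)) t) ≤ 1 / ((L+1:ℕ):ℝ) := by
        rw [le_div_iff₀ (by positivity : (0:ℝ) < ((L+1:ℕ):ℝ))]
        have : ((L+1:ℕ):ℝ) = ((L+1):ℝ) := by push_cast; ring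
        nlinarith [h2, h3]
      have hsmall : 1 / ((L+1:ℕ):ℝ) < γ/2 := by
        rw [div_lt_iff₀ (by positivity : (0:ℝ) < ((L+1:ℕ):ℝ))]
        rw [div_lt_iff₀ hγ] at hLbig
        nlinarith
      nlinarith [h1, htau_le, hsmall]
    -- accumulate the integral bounds
    set Cf : ℕ → ℝ := fun k => if h : 2 ≤ k then (hC k h).choose else 0 with hCf
    have hCfnn : ∀ k, 0 ≤ Cf k := by
      intro k
      rw [hCf]
      by_cases h : 2 ≤ k
      · simp only [dif_pos h]; exact (hC k h).choose_spec.1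
      · simp [h]
    have hCfb : ∀ k, ∀ T : ℝ, 0 ≤ T → (∫ t in (0:ℝ)..T, c k t) ≤ Cf k := by
      intro k T hT
      rw [hCf]
      by_cases h : 2 ≤ k
      · simp only [dif_pos h]; exact (hC k h).choose_spec.2 T hT
      · simp only [dif_neg h]
        have hk01 : k = 0 ∨ k = 1 := by omega
        rcases hk01 with rfl | rfl
        · rw [show c 0 = (fun _ : ℝ => (0:ℝ)) from funext hc0]; simp
        · rw [show c 1 = (fun _ : ℝ => (0:ℝ)) from funext hc1]; simp
    set Ctot : ℝ := ∑ k ∈ Finset.range (L+1), Cf k with hCtot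
    have hCtotnn : 0 ≤ Ctot := Finset.sum_nonneg (fun k _ => hCfnn k)
    -- the final contradiction
    set T : ℝ := (Ctot + 1) * 2 / γ with hTdef
    have hTnn : 0 ≤ T := by positivity
    have hsubIcc : Set.uIcc (0:ℝ) T ⊆ Set.Ici 0 := by
      rw [Set.uIcc_of_le hTnn]; exact fun x hx => hx.1
    have hintk : ∀ k : ℕ, IntervalIntegrable (c k) MeasureTheory.volume 0 T := by
      intro k
      apply ContinuousOn.intervalIntegrable
      intro u hu
      exact (hccont k u (hsubIcc hu)).continuousWithinAt
    have hintsum : IntervalIntegrable (fun t => ∑ k ∈ Finset.range (L+1), c k t)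
        MeasureTheory.volume 0 T := by
      apply ContinuousOn.intervalIntegrable
      apply continuousOn_finset_sum
      intro k _
      intro u hu
      exact (hccont k u (hsubIcc hu)).continuousWithinAt
    have hlower : γ/2 * T ≤ ∫ t in (0:ℝ)..T, ∑ k ∈ Finset.range (L+1), c k t := by
      have := intervalIntegral.integral_mono_on hTnn
        (intervalIntegrable_const (c := γ/2)) hintsum
        (fun t htmem => hlow t htmem.1)
      rw [intervalIntegral.integral_const] at this
      calc γ/2 * T = (T - 0) • (γ/2) := by simp [smul_eq_mul]; ring
        _ ≤ _ := this
    have hupper2 : (∫ t in (0:ℝ)..T, ∑ k ∈ Finset.range (L+1), c k t) ≤ Ctot := by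
      rw [intervalIntegral.integral_finset_sum (fun k _ => hintk k)]
      rw [hCtot]
      exact Finset.sum_le_sum (fun k _ => hCfb k T hTnn)
    have hfin : γ/2 * T ≤ Ctot := le_trans hlower hupper2
    have heq : γ / 2 * T = Ctot + 1 := by
      rw [hTdef]
      field_simp
    linarith
  refine ⟨fun _ => hSA, ?_⟩
  rw [tendsto_order]
  constructor
  · intro a ha
    filter_upwards [Filter.eventually_ge_atTop (0:ℝ)] with t ht
    exact lt_of_lt_of_le ha (hg_nonneg t ht)
  · intro a ha
    have hk := hkey a ha
    push_neg at hk
    obtain ⟨t0, ht0, hlt⟩ := hk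
    filter_upwards [Filter.eventually_ge_atTop t0] with t ht
    rcases eq_or_lt_of_le ht with rfl | hlt2
    · exact hlt
    · exact lt_trans (hSA (Set.mem_Ici.mpr ht0) (Set.mem_Ici.mpr (le_trans ht0 ht)) hlt2) hlt
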